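/- Let K be a field and R = K⟨x,y⟩/(yx−1) the Jacobson algebra. Then R is not left Noetherian, yet every simple left R-module is finitely presented. -/

import Mathlib

/-- A directed graph: a set of vertices, a set of edges, and source/range maps. -/
structure DirGraph where
  V : Type
  E : Type
  src : E → V
  rng : E → V

namespace DirGraph

variable (G : DirGraph)

/-- `Connects u v` means there is a finite path (possibly of length 0) from `u` to `v`,
i.e. `u ≥ v`. -/
inductive Connects : G.V → G.V → Prop
  | refl (v : G.V) : Connects v v
  | step {u w : G.V} (e : G.E) : G.src e = u → Connects (G.rng e) w → Connects u w

/-- A vertex is a sink if it emits no edges. -/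
def IsSink (v : G.V) : Prop := ∀ e : G.E, G.src e ≠ v

/-- A vertex is an infinite emitter if it emits infinitely many edges. -/
def IsInfiniteEmitter (v : G.V) : Prop := {e : G.E | G.src e = v}.Infinite

/-- A vertex is regular if it emits finitely many, but at least one, edges. -/
def IsRegular (v : G.V) : Prop :=
  {e : G.E | G.src e = v}.Finite ∧ {e : G.E | G.src e = v}.Nonempty

/-- A set of vertices is hereditary if it is closed under `≥`. -/
def Hereditary (H : Set G.V) : Prop := ∀ v ∈ H, ∀ w, G.Connects v w → w ∈ H

/-- A set of vertices is saturated if it contains every regular vertex all of whose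
emitted edges have range in the set. -/
def Saturated (H : Set G.V) : Prop :=
  ∀ v, G.IsRegular v → (∀ e : G.E, G.src e = v → G.rng e ∈ H) → v ∈ H

/-- `M(v) = {w : w ≥ v}`. -/
def Mv (v : G.V) : Set G.V := {w | G.Connects w v}

/-- A closed path based at `v`: a nonempty list of consecutive edges starting and ending
at `v`. -/
structure ClosedPath (v : G.V) where
  edges : List G.E
  ne : edges ≠ []
  chain : edges.Chain' (fun e f => G.rng e = G.src f)
  src_eq : G.src (edges.head ne) = v
  rng_eq : G.rng (edges.getLast ne) = v

/-- A cycle based at `v`: a closed path based at `v` which does not pass through any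
vertex twice. -/
structure Cycle (v : G.V) extends ClosedPath G v where
  nodup : (edges.map G.src).Nodup

/-- An infinite path: a sequence of consecutive edges, indexed by `ℕ`. -/
structure InfPath where
  edge : ℕ → G.E
  chain : ∀ n, G.rng (edge n) = G.src (edge (n + 1))

variable {G}

@[ext] lemma InfPath.ext {p q : G.InfPath} (h : p.edge = q.edge) : p = q := by
  cases p; cases q; simp only at h; subst h; rfl

/-- `τ_{>n}(p)`, the shift of the infinite path `p` by `n`. -/
def InfPath.shift (p : G.InfPath) (n : ℕ) : G.InfPath where
  edge k := p.edge (k + n)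
  chain k := by have := p.chain (k + n); rwa [show k + n + 1 = k + 1 + n by omega] at this

/-- Two infinite paths are tail-equivalent if some shift of the first equals some shift
of the second. -/
def TailEquiv (p q : G.InfPath) : Prop := ∃ m n : ℕ, p.shift m = q.shift n

/-- The set `p^0` of vertices visited by the infinite path `p`. -/
def InfPath.vertices (p : G.InfPath) : Set G.V := {v | ∃ n : ℕ, G.src (p.edge n) = v}

/-- `M(p) = {w : w ≥ v for some vertex v on p}`. -/
def Mp (p : G.InfPath) : Set G.V := {w | ∃ v ∈ p.vertices, G.Connects w v}

/-- The set `c^0` of vertices visited by a closed path `c`. -/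
def ClosedPath.vertexSet {v : G.V} (c : G.ClosedPath v) : Set G.V :=
  {w | ∃ e ∈ c.edges, G.src e = w}

/-- An exit for the (closed) path `c`: an edge `e` with `s(e) = s(e_i)` and `e ≠ e_i`
for some `i`. -/
def ClosedPath.HasExit {v : G.V} (c : G.ClosedPath v) : Prop :=
  ∃ (i : Fin c.edges.length) (e : G.E), G.src e = G.src (c.edges.get i) ∧ e ≠ c.edges.get i

lemma ClosedPath.length_pos {v : G.V} (c : G.ClosedPath v) : 0 < c.edges.length :=
  List.length_pos_iff.mpr c.ne

/-- The rational infinite path `c^∞ = ccc⋯` attached to a closed path `c`. -/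
def ClosedPath.toInfPath {v : G.V} (c : G.ClosedPath v) : G.InfPath where
  edge n := c.edges.get ⟨n % c.edges.length, Nat.mod_lt _ c.length_pos⟩
  chain n := by
    have hL : 0 < c.edges.length := c.length_pos
    have hmod : (n + 1) % c.edges.length = (n % c.edges.length + 1) % c.edges.length :=
      (Nat.mod_add_mod n c.edges.length 1).symm
    by_cases h : n % c.edges.length + 1 < c.edges.length
    · have h2 : (n + 1) % c.edges.length = n % c.edges.length + 1 := by
        rw [hmod, Nat.mod_eq_of_lt h]
      have := List.isChain_iff_getElem.mp c.chain (n % c.edges.length) (by omega)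
      simp only [h2, List.get_eq_getElem]
      convert this using 3
    · have hlast : n % c.edges.length = c.edges.length - 1 := by
        have := Nat.mod_lt n hL; omega
      have h2 : (n + 1) % c.edges.length = 0 := by
        rw [hmod, hlast, Nat.sub_add_cancel hL, Nat.mod_self]
      have e1 : c.edges.get ⟨n % c.edges.length, Nat.mod_lt _ hL⟩ = c.edges.getLast c.ne := by
        rw [List.getLast_eq_getElem]
        simp [hlast]
      have e2 : c.edges.get ⟨(n + 1) % c.edges.length, Nat.mod_lt _ hL⟩ =
          c.edges.head c.ne := by
        rw [List.head_eq_getElem]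
        simp [h2]
      rw [e1, e2, c.rng_eq, c.src_eq]

end DirGraph

namespace DirGraph
variable {G : DirGraph}

lemma InfPath.shift_shift (p : G.InfPath) (m n : ℕ) :
    (p.shift m).shift n = p.shift (n + m) := by
  ext k
  show p.edge (k + n + m) = p.edge (k + (n + m))
  rw [Nat.add_assoc]

/-- Concatenation of two closed paths based at the same vertex. -/
def ClosedPath.comp {v : G.V} (c d : G.ClosedPath v) : G.ClosedPath v where
  edges := c.edges ++ d.edges
  ne := by simp [c.ne]
  chain := by
    refine c.chain.append d.chain ?_
    intro x hx y hy
    rw [List.getLast?_eq_getLast c.ne, Option.mem_def, Option.some_inj] at hx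
    rw [List.head?_eq_head d.ne, Option.mem_def, Option.some_inj] at hy
    rw [← hx, ← hy] at *
    rw [c.rng_eq, d.src_eq]
  src_eq := by
    have : (c.edges ++ d.edges).head (by simp [c.ne]) = c.edges.head c.ne := by
      rw [List.head_append]
      simp [c.ne]
    rw [this, c.src_eq]
  rng_eq := by
    have : (c.edges ++ d.edges).getLast (by simp [c.ne]) = d.edges.getLast d.ne := by
      rw [List.getLast_append]
      simp [d.ne]
    rw [this, d.rng_eq]

/-- `c.pow m` is the closed path `c^{m+1}`. -/
def ClosedPath.pow {v : G.V} (c : G.ClosedPath v) : ℕ → G.ClosedPath v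
  | 0 => c
  | (m + 1) => c.comp (c.pow m)

/-- Auxiliary index function for the infinite concatenation of a sequence of closed
paths based at the same vertex: `blockIdx f n` is the pair (block number, offset in
the block) corresponding to overall position `n`. -/
def blockIdx {v : G.V} (f : ℕ → G.ClosedPath v) : ℕ → (b : ℕ) × Fin (f b).edges.length
  | 0 => ⟨0, ⟨0, (f 0).length_pos⟩⟩
  | n + 1 =>
    if h : ((blockIdx f n).2 : ℕ) + 1 < (f (blockIdx f n).1).edges.length then
      ⟨(blockIdx f n).1, ⟨(blockIdx f n).2 + 1, h⟩⟩
    else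
      ⟨(blockIdx f n).1 + 1, ⟨0, (f ((blockIdx f n).1 + 1)).length_pos⟩⟩

/-- The infinite path `f 0 · f 1 · f 2 ⋯` obtained by concatenating a sequence of
closed paths based at the same vertex. -/
def infConcat {v : G.V} (f : ℕ → G.ClosedPath v) : G.InfPath where
  edge n := (f (blockIdx f n).1).edges.get (blockIdx f n).2
  chain n := by
    rw [blockIdx]
    by_cases h : ((blockIdx f n).2 : ℕ) + 1 < (f (blockIdx f n).1).edges.length
    · rw [dif_pos h]
      exact List.isChain_iff_getElem.mp (f (blockIdx f n).1).chain ((blockIdx f n).2 : ℕ) (by omega)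
    · rw [dif_neg h]
      have h2 : ((blockIdx f n).2 : ℕ) = (f (blockIdx f n).1).edges.length - 1 := by
        have := (blockIdx f n).2.isLt; omega
      have e1 : (f (blockIdx f n).1).edges.get (blockIdx f n).2 =
          (f (blockIdx f n).1).edges.getLast (f (blockIdx f n).1).ne := by
        rw [List.getLast_eq_getElem]
        simp only [List.get_eq_getElem]
        congr 1
      have e2 : (f ((blockIdx f n).1 + 1)).edges.get ⟨0, (f ((blockIdx f n).1 + 1)).length_pos⟩ =
          (f ((blockIdx f n).1 + 1)).edges.head (f ((blockIdx f n).1 + 1)).ne := by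
        rw [List.head_eq_getElem]
        rfl
      rw [e1]
      rw [e2]
      rw [(f (blockIdx f n).1).rng_eq]
      rw [(f ((blockIdx f n).1 + 1)).src_eq]

end DirGraph

open Classical

namespace DirGraph

variable (K : Type) [Field K] (G : DirGraph)

/-- The generator of the free algebra corresponding to a vertex `v`. -/
noncomputable def vtx (v : G.V) : FreeAlgebra K (G.V ⊕ G.E ⊕ G.E) :=
  FreeAlgebra.ι K (Sum.inl v)

/-- The generator of the free algebra corresponding to an edge `e`. -/
noncomputable def edg (e : G.E) : FreeAlgebra K (G.V ⊕ G.E ⊕ G.E) :=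
  FreeAlgebra.ι K (Sum.inr (Sum.inl e))

/-- The generator of the free algebra corresponding to a ghost edge `e*`. -/
noncomputable def gst (e : G.E) : FreeAlgebra K (G.V ⊕ G.E ⊕ G.E) :=
  FreeAlgebra.ι K (Sum.inr (Sum.inr e))

variable [Fintype G.V] [Fintype G.E]

/-- The defining relations of the Leavitt path algebra of a finite graph `G` over a
field `K`. -/
inductive LeavittRel : FreeAlgebra K (G.V ⊕ G.E ⊕ G.E) → FreeAlgebra K (G.V ⊕ G.E ⊕ G.E) → Prop
  | vtx_self (v : G.V) : LeavittRel (vtx K G v * vtx K G v) (vtx K G v)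
  | vtx_ne {v w : G.V} (h : v ≠ w) : LeavittRel (vtx K G v * vtx K G w) 0
  | vtx_sum : LeavittRel (∑ v : G.V, vtx K G v) 1
  | edge_src (e : G.E) : LeavittRel (vtx K G (G.src e) * edg K G e) (edg K G e)
  | edge_rng (e : G.E) : LeavittRel (edg K G e * vtx K G (G.rng e)) (edg K G e)
  | ghost_rng (e : G.E) : LeavittRel (vtx K G (G.rng e) * gst K G e) (gst K G e)
  | ghost_src (e : G.E) : LeavittRel (gst K G e * vtx K G (G.src e)) (gst K G e)
  | ck1_same (e : G.E) : LeavittRel (gst K G e * edg K G e) (vtx K G (G.rng e))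
  | ck1_ne {e f : G.E} (h : e ≠ f) : LeavittRel (gst K G e * edg K G f) 0
  | ck2 (v : G.V) (h : ¬ G.IsSink v) :
      LeavittRel (∑ e ∈ Finset.univ.filter (fun e => G.src e = v), edg K G e * gst K G e)
        (vtx K G v)

/-- The Leavitt path algebra of a finite graph `G` over a field `K`. -/
noncomputable abbrev LeavittPathAlgebra := RingQuot (LeavittRel K G)

/-- The image of a vertex `v` in the Leavitt path algebra. -/
noncomputable def Lvtx (v : G.V) : LeavittPathAlgebra K G :=
  RingQuot.mkAlgHom K (LeavittRel K G) (vtx K G v)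

/-- The image of an edge `e` in the Leavitt path algebra. -/
noncomputable def Ledg (e : G.E) : LeavittPathAlgebra K G :=
  RingQuot.mkAlgHom K (LeavittRel K G) (edg K G e)

/-- The image of a ghost edge `e*` in the Leavitt path algebra. -/
noncomputable def Lgst (e : G.E) : LeavittPathAlgebra K G :=
  RingQuot.mkAlgHom K (LeavittRel K G) (gst K G e)

end DirGraph


/-- The defining relation `y·x = 1` of the Jacobson algebra, inside the free algebra
on two generators `x = ι 0`, `y = ι 1`. -/
inductive JacRel (K : Type) [Field K] : FreeAlgebra K (Fin 2) → FreeAlgebra K (Fin 2) → Prop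
  | rel : JacRel K (FreeAlgebra.ι K 1 * FreeAlgebra.ι K 0) 1

/-- The Jacobson algebra `K⟨x,y⟩/(yx - 1)`. -/
noncomputable abbrev JacobsonAlgebra (K : Type) [Field K] := RingQuot (JacRel K)

/-!
In `R` we have `y x = 1` but `x y ≠ 1` (on `K^(ℕ)`, `x` and `y` act as the shift and its left
inverse), whereas left Noetherian rings are Dedekind-finite.

Let `M` be simple and `e = 1 - x y`. Modulo a left ideal `R (y - w(x))` every element of `R` is a
polynomial in `x`, and `e y^k p(x)` is a nonzero multiple of `e` when `p = X^k q` with `q(0) ≠ 0`.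
If `e m ≠ 0`, then `e m` generates `M` and is killed by `y`; the two facts above make `R y` a
maximal left ideal, so `M ≅ R / R y`. If `e` kills `M`, then `x` acts invertibly with inverse `y`,
so every element of `R` acts as a Laurent polynomial in `x`; by simplicity a nonzero `m` is then
killed by some `q(x)` with `q` monic and `q(0) ≠ 0` (otherwise `m ∈ R (x - 1) m` yields a nonzero
polynomial relation). Modulo `R q(x)`, `y` is a polynomial in `x`, hence `R / R q(x)` is
finite-dimensional and the annihilator of `m` is finitely generated.
-/

open Polynomial Submodule

theorem Module.finitePresentation_of_surjective_of_isNoetherian_quotient {R N M : Type*} [Ring R]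
    [AddCommGroup N] [Module R N] [Module.FinitePresentation R N] [AddCommGroup M] [Module R M]
    (f : N →ₗ[R] M) (hf : Function.Surjective f) {J : Submodule R N} (hJ : J.FG)
    (hJf : J ≤ LinearMap.ker f) [IsNoetherian R (N ⧸ J)] : Module.FinitePresentation R M := by
  refine Module.finitePresentation_of_surjective f hf (fg_of_fg_map_of_fg_inf_ker J.mkQ
    (IsNoetherian.noetherian _) ?_)
  rwa [ker_mkQ, inf_of_le_right hJf]

namespace JacobsonAlgebra

variable (K : Type) [Field K]

noncomputable def x : JacobsonAlgebra K := RingQuot.mkAlgHom K (JacRel K) (FreeAlgebra.ι K 0)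

noncomputable def y : JacobsonAlgebra K := RingQuot.mkAlgHom K (JacRel K) (FreeAlgebra.ι K 1)

theorem y_mul_x : y K * x K = 1 := by
  simpa only [x, y, map_mul, map_one] using RingQuot.mkAlgHom_rel K (JacRel.rel (K := K))

theorem y_pow_mul_x_pow (n : ℕ) : y K ^ n * x K ^ n = 1 := by
  induction n with
  | zero => simp
  | succ n ih => rw [pow_succ, pow_succ', mul_assoc, ← mul_assoc (y K), y_mul_x, one_mul, ih]

theorem adjoin_x_y : Algebra.adjoin K {x K, y K} = ⊤ := by
  have h := congrArg (Subalgebra.map (RingQuot.mkAlgHom K (JacRel K)))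
    (FreeAlgebra.adjoin_range_ι K (Fin 2))
  rw [AlgHom.map_adjoin, Algebra.map_top,
    (AlgHom.range_eq_top _).mpr (RingQuot.mkAlgHom_surjective K (JacRel K)),
    ← Set.range_comp] at h
  rw [← h]
  congr 1
  ext r
  simp [Fin.exists_fin_two, x, y, eq_comm]

theorem induction_mul_left {P : JacobsonAlgebra K → Prop} (one : P 1)
    (add : ∀ a b, P a → P b → P (a + b)) (smul : ∀ (c : K) a, P a → P (c • a))
    (x_mul : ∀ a, P a → P (x K * a)) (y_mul : ∀ a, P a → P (y K * a))
    (r : JacobsonAlgebra K) : P r := by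
  suffices h : ∀ s, P s → P (r * s) by simpa using h 1 one
  have hr : r ∈ Algebra.adjoin K {x K, y K} := adjoin_x_y K ▸ Algebra.mem_top
  induction hr using Algebra.adjoin_induction with
  | mem r hr => rcases hr with rfl | rfl <;> assumption
  | algebraMap c => exact fun s hs => Algebra.smul_def c s ▸ smul c s hs
  | add a b _ _ ha hb => exact fun s hs => (add_mul a b s).symm ▸ add _ _ (ha s hs) (hb s hs)
  | mul a b _ _ ha hb => exact fun s hs => (mul_assoc a b s).symm ▸ ha _ (hb s hs)

noncomputable def shiftRep : JacobsonAlgebra K →ₐ[K] Module.End K (ℕ →₀ K) :=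
  RingQuot.liftAlgHom K ⟨FreeAlgebra.lift K
    ![Finsupp.lmapDomain K K Nat.succ, Finsupp.lcomapDomain Nat.succ Nat.succ_injective], by
    rintro _ _ ⟨⟩
    ext v n
    simp⟩

theorem x_mul_y_ne_one : x K * y K ≠ 1 := by
  intro h
  have := congr($(congrArg (shiftRep K) h) (Finsupp.single 0 1) 0)
  simp [shiftRep, x, y] at this

theorem not_isNoetherianRing : ¬ IsNoetherianRing (JacobsonAlgebra K) := fun _ =>
  x_mul_y_ne_one K (mul_eq_one_symm (y_mul_x K))

theorem aeval_x_eq (p : K[X]) :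
    aeval (x K) p = x K * aeval (x K) p.divX + algebraMap K _ (p.coeff 0) := by
  conv_lhs => rw [← X_mul_divX_add p]
  rw [map_add, map_mul, aeval_X, aeval_C]

theorem y_mul_aeval_x (p : K[X]) :
    y K * aeval (x K) p = aeval (x K) p.divX + p.coeff 0 • y K := by
  rw [aeval_x_eq, mul_add, ← mul_assoc, y_mul_x, one_mul, ← Algebra.commutes, Algebra.smul_def]

noncomputable def e : JacobsonAlgebra K := 1 - x K * y K

theorem y_mul_e : y K * e K = 0 := by
  rw [e, mul_sub, mul_one, ← mul_assoc, y_mul_x, one_mul, sub_self]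

theorem e_mul_aeval_x (p : K[X]) : e K * aeval (x K) p = p.coeff 0 • e K := by
  have e_mul_x : e K * x K = 0 := by rw [e, sub_mul, one_mul, mul_assoc, y_mul_x, mul_one, sub_self]
  rw [aeval_x_eq, mul_add, ← mul_assoc, e_mul_x, zero_mul, zero_add, ← Algebra.commutes,
    ← Algebra.smul_def]

theorem e_mem_span_aeval_x {p : K[X]} (hp : p ≠ 0) :
    e K ∈ span (JacobsonAlgebra K) {aeval (x K) p} := by
  obtain ⟨q, hpq, hq⟩ := exists_eq_pow_rootMultiplicity_mul_and_not_dvd p hp 0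
  set k := rootMultiplicity 0 p
  rw [map_zero, sub_zero] at hpq hq
  rw [X_dvd_iff] at hq
  refine mem_span_singleton.mpr ⟨(q.coeff 0)⁻¹ • (e K * y K ^ k), ?_⟩
  rw [hpq, smul_eq_mul, map_mul, map_pow, aeval_X, smul_mul_assoc, mul_assoc,
    ← mul_assoc (y K ^ k), y_pow_mul_x_pow, one_mul, e_mul_aeval_x, inv_smul_smul₀ hq]

theorem exists_sub_aeval_x_mem_span (w : K[X]) (r : JacobsonAlgebra K) :
    ∃ p : K[X], r - aeval (x K) p ∈ span (JacobsonAlgebra K) {y K - aeval (x K) w} := by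
  induction r using induction_mul_left with
  | one => exact ⟨1, by simp⟩
  | add a b ha hb =>
    obtain ⟨p, hp⟩ := ha
    obtain ⟨q, hq⟩ := hb
    exact ⟨p + q, by simpa [add_sub_add_comm] using add_mem hp hq⟩
  | smul c a ha =>
    obtain ⟨p, hp⟩ := ha
    exact ⟨c • p, by simpa [smul_sub] using smul_of_tower_mem _ c hp⟩
  | x_mul a ha =>
    obtain ⟨p, hp⟩ := ha
    exact ⟨X * p, by simpa [mul_sub] using smul_mem _ (x K) hp⟩
  | y_mul a ha =>
    obtain ⟨p, hp⟩ := ha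
    refine ⟨p.divX + C (p.coeff 0) * w, ?_⟩
    have h : y K * a - aeval (x K) (p.divX + C (p.coeff 0) * w) =
        y K * (a - aeval (x K) p) + p.coeff 0 • (y K - aeval (x K) w) := by
      rw [mul_sub, y_mul_aeval_x, map_add, map_mul, aeval_C, ← Algebra.smul_def, smul_sub]
      abel
    rw [h]
    exact add_mem (smul_mem _ _ hp) (smul_of_tower_mem _ _ (mem_span_singleton_self _))

theorem isCoatom_span_y : IsCoatom (span (JacobsonAlgebra K) {y K}) := by
  refine ⟨fun h => x_mul_y_ne_one K ?_, fun J hJ => ?_⟩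
  · obtain ⟨t, ht⟩ := mem_span_singleton.mp (h ▸ mem_top : (1 : JacobsonAlgebra K) ∈ _)
    have htx : t = x K := by simpa [mul_assoc, y_mul_x] using congrArg (· * x K) ht
    rwa [← htx]
  · obtain ⟨r, hrJ, hry⟩ := SetLike.exists_of_lt hJ
    obtain ⟨p, hp⟩ := exists_sub_aeval_x_mem_span K 0 r
    rw [map_zero, sub_zero] at hp
    have hp0 : p ≠ 0 := by rintro rfl; exact hry (by simpa using hp)
    have hpJ : aeval (x K) p ∈ J := by simpa using sub_mem hrJ (hJ.le hp)
    have heJ : e K ∈ J := span_singleton_le_iff_mem _ _ |>.mpr hpJ (e_mem_span_aeval_x K hp0)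
    have hxyJ : x K * y K ∈ J := J.smul_mem _ (hJ.le (mem_span_singleton_self _))
    exact (Ideal.eq_top_iff_one J).mpr (by simpa [e] using add_mem heJ hxyJ)

theorem y_sub_aeval_x_mem_span {q : K[X]} (hq : q.coeff 0 ≠ 0) :
    y K - aeval (x K) (-(q.coeff 0)⁻¹ • q.divX) ∈
      span (JacobsonAlgebra K) {aeval (x K) q} := by
  refine mem_span_singleton.mpr ⟨(q.coeff 0)⁻¹ • y K, ?_⟩
  rw [smul_eq_mul, smul_mul_assoc, y_mul_aeval_x, smul_add, inv_smul_smul₀ hq, map_smul]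
  module

theorem finite_quotient_span_aeval_x {q : K[X]} (hq : q.Monic) (hq₀ : q.coeff 0 ≠ 0) :
    Module.Finite K (JacobsonAlgebra K ⧸ span (JacobsonAlgebra K) {aeval (x K) q}) := by
  set J := span (JacobsonAlgebra K) {aeval (x K) q}
  let φ : degreeLT K q.natDegree →ₗ[K] JacobsonAlgebra K ⧸ J :=
    J.mkQ.restrictScalars K ∘ₗ (aeval (x K)).toLinearMap ∘ₗ (degreeLT K q.natDegree).subtype
  refine Module.Finite.of_surjective φ fun r => ?_
  obtain ⟨r, rfl⟩ := J.mkQ_surjective r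
  obtain ⟨p, hp⟩ := exists_sub_aeval_x_mem_span K (-(q.coeff 0)⁻¹ • q.divX) r
  have hpJ : r - aeval (x K) p ∈ J :=
    span_singleton_le_iff_mem _ _ |>.mpr (y_sub_aeval_x_mem_span K hq₀) hp
  have hr : r - aeval (x K) (p %ₘ q) =
      (r - aeval (x K) p) + aeval (x K) (p /ₘ q * q) := by
    rw [modByMonic_eq_sub_mul_div p q, mul_comm, map_sub]
    abel
  have hdeg : p %ₘ q ∈ degreeLT K q.natDegree :=
    mem_degreeLT.mpr (degree_eq_natDegree hq.ne_zero ▸ degree_modByMonic_lt p hq)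
  refine ⟨⟨p %ₘ q, hdeg⟩, (Submodule.Quotient.eq J).mpr ?_⟩
  change aeval (x K) (p %ₘ q) - r ∈ J
  rw [← neg_mem_iff, neg_sub, hr, map_mul]
  exact add_mem hpJ (J.smul_mem _ (mem_span_singleton_self _))

variable {K} {M : Type} [AddCommGroup M] [Module (JacobsonAlgebra K) M]

theorem finitePresentation_of_e_smul_ne_zero [IsSimpleModule (JacobsonAlgebra K) M] {m : M}
    (hm : e K • m ≠ 0) : Module.FinitePresentation (JacobsonAlgebra K) M := by
  set f := LinearMap.toSpanSingleton (JacobsonAlgebra K) M (e K • m)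
  have hyf : y K ∈ LinearMap.ker f := by simp [f, smul_smul, y_mul_e]
  have hf_ne_top : LinearMap.ker f ≠ ⊤ := fun h => hm <| by
    simpa [f] using congr($(LinearMap.ker_eq_top.mp h) 1)
  have hker : LinearMap.ker f = span _ {y K} :=
    ((isCoatom_span_y K).le_iff_eq hf_ne_top).mp (span_singleton_le_iff_mem _ _ |>.mpr hyf)
  exact Module.finitePresentation_of_surjective f
    (IsSimpleModule.toSpanSingleton_surjective _ hm) (hker ▸ fg_span_singleton _)

theorem exists_x_pow_mul_smul_eq_aeval_x_smul (he : ∀ m : M, e K • m = 0)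
    (r : JacobsonAlgebra K) :
    ∃ (n : ℕ) (p : K[X]), ∀ m : M, (x K ^ n * r) • m = aeval (x K) p • m := by
  have hxy : ∀ m : M, (x K * y K) • m = m := fun m =>
    (sub_eq_zero.mp (by simpa [e, sub_smul] using he m)).symm
  induction r using induction_mul_left with
  | one => exact ⟨0, 1, by simp⟩
  | add a b ha hb =>
    obtain ⟨n₁, p₁, h₁⟩ := ha
    obtain ⟨n₂, p₂, h₂⟩ := hb
    refine ⟨n₁ + n₂, X ^ n₂ * p₁ + X ^ n₁ * p₂, fun m => ?_⟩
    have ha' : (x K ^ (n₁ + n₂) * a) • m = (x K ^ n₂ * aeval (x K) p₁) • m := by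
      rw [add_comm, pow_add, mul_assoc, mul_smul, h₁, ← mul_smul]
    have hb' : (x K ^ (n₁ + n₂) * b) • m = (x K ^ n₁ * aeval (x K) p₂) • m := by
      rw [pow_add, mul_assoc, mul_smul, h₂, ← mul_smul]
    simp [mul_add, add_smul, ha', hb']
  | smul c a ha =>
    obtain ⟨n, p, h⟩ := ha
    refine ⟨n, c • p, fun m => ?_⟩
    rw [map_smul, mul_smul_comm, Algebra.smul_def, Algebra.smul_def, mul_smul _ (x K ^ n * a), h,
      ← mul_smul]
  | x_mul a ha =>
    obtain ⟨n, p, h⟩ := ha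
    refine ⟨n, X * p, fun m => ?_⟩
    rw [← mul_assoc, ← pow_succ, pow_succ', mul_assoc, mul_smul, h, ← mul_smul, map_mul,
      aeval_X]
  | y_mul a ha =>
    obtain ⟨n, p, h⟩ := ha
    refine ⟨n + 1, p, fun m => ?_⟩
    rw [pow_succ, mul_assoc, ← mul_assoc (x K), mul_smul, mul_smul, hxy, ← mul_smul, h]

theorem exists_aeval_x_smul_eq_zero [IsSimpleModule (JacobsonAlgebra K) M]
    (he : ∀ m : M, e K • m = 0) (m : M) :
    ∃ p : K[X], p ≠ 0 ∧ aeval (x K) p • m = 0 := by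
  by_contra! h
  have hm₁ : (x K - 1) • m ≠ 0 := by simpa using h (X - C 1) (X_sub_C_ne_zero 1)
  obtain ⟨s, hs⟩ := mem_span_singleton.mp
    ((IsSimpleModule.span_singleton_eq_top (JacobsonAlgebra K) hm₁).symm ▸ mem_top :
      m ∈ span _ {(x K - 1) • m})
  obtain ⟨n, p, hnp⟩ := exists_x_pow_mul_smul_eq_aeval_x_smul he s
  have hxn : x K ^ n • m = aeval (x K) p • (x K - 1) • m := by rw [← hnp, mul_smul, hs]
  refine h (X ^ n - p * (X - C 1)) (fun h₀ => by simpa using congrArg (eval 1) h₀) ?_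
  simp [sub_smul, mul_smul, hxn]

theorem exists_monic_aeval_x_smul_eq_zero {m : M} {p : K[X]} (hp : p ≠ 0)
    (hpm : aeval (x K) p • m = 0) :
    ∃ q : K[X], q.Monic ∧ q.coeff 0 ≠ 0 ∧ aeval (x K) q • m = 0 := by
  obtain ⟨q, hpq, hq⟩ := exists_eq_pow_rootMultiplicity_mul_and_not_dvd p hp 0
  set k := rootMultiplicity 0 p
  rw [map_zero, sub_zero] at hpq hq
  rw [X_dvd_iff] at hq
  have hq₀ : q ≠ 0 := by rintro rfl; simp at hq
  have hqm : aeval (x K) q • m = 0 := by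
    rw [hpq, map_mul, map_pow, aeval_X] at hpm
    rw [← one_mul (aeval (x K) q), ← y_pow_mul_x_pow K k, mul_assoc, mul_smul, hpm, smul_zero]
  refine ⟨q * C q.leadingCoeff⁻¹, monic_mul_leadingCoeff_inv hq₀,
    by simpa [hq₀] using hq, ?_⟩
  rw [mul_comm, map_mul, mul_smul, hqm, smul_zero]

theorem finitePresentation_of_forall_e_smul_eq_zero [IsSimpleModule (JacobsonAlgebra K) M]
    (he : ∀ m : M, e K • m = 0) : Module.FinitePresentation (JacobsonAlgebra K) M := by
  have := IsSimpleModule.nontrivial (JacobsonAlgebra K) M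
  obtain ⟨m, hm⟩ := exists_ne (0 : M)
  obtain ⟨p, hp, hpm⟩ := exists_aeval_x_smul_eq_zero he m
  obtain ⟨q, hq, hq₀, hqm⟩ := exists_monic_aeval_x_smul_eq_zero hp hpm
  have : IsNoetherian (JacobsonAlgebra K)
      (JacobsonAlgebra K ⧸ span (JacobsonAlgebra K) {aeval (x K) q}) :=
    have := finite_quotient_span_aeval_x K hq hq₀
    isNoetherian_of_tower K (isNoetherian_of_isNoetherianRing_of_finite K _)
  exact Module.finitePresentation_of_surjective_of_isNoetherian_quotient
    (LinearMap.toSpanSingleton _ M m) (IsSimpleModule.toSpanSingleton_surjective _ hm)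
    (fg_span_singleton _) (span_singleton_le_iff_mem _ _ |>.mpr hqm)

end JacobsonAlgebra

/-- The Jacobson algebra `R = K⟨x,y⟩/(yx-1)` is not left Noetherian, yet every simple
left `R`-module is finitely presented. -/
theorem jacobsonAlgebra_not_noetherian_and_simples_finitelyPresented
    (K : Type) [Field K] :
    ¬ IsNoetherianRing (JacobsonAlgebra K) ∧
      (∀ (M : Type) [AddCommGroup M] [Module (JacobsonAlgebra K) M],
        IsSimpleModule (JacobsonAlgebra K) M →
          Module.FinitePresentation (JacobsonAlgebra K) M) := by
  refine ⟨JacobsonAlgebra.not_isNoetherianRing K, fun M _ _ _ => ?_⟩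
  by_cases he : ∀ m : M, JacobsonAlgebra.e K • m = 0
  · exact JacobsonAlgebra.finitePresentation_of_forall_e_smul_eq_zero he
  · obtain ⟨m, hm⟩ := not_forall.mp he
    exact JacobsonAlgebra.finitePresentation_of_e_smul_ne_zero hm
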